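/- arXiv:1506.00742 — 5 statements merged into one kernel-verified Lean document; each statement's English description precedes it below -/
import Mathlib

section
/- Let K be a nonarchimedean valued field that is spherically complete (every decreasing chain of closed balls has nonempty intersection), and let τ : K → K be a ring homomorphism preserving the absolute value. If τ induces a surjection on the residue field and on the value group (i.e., every residue class contains τ of some element of the same valuation, and every value in |K^×| is attained by τ(K^×)), then τ is surjective. -/
/-!
Fix `z` and put a closed ball of radius `|z - τ y|` around every `y`. By the ultrametric
inequality any two of these balls are nested, so spherical completeness gives a common point `x`.
If `τ x ≠ z`, the approximation hypothesis yields `y` with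
`|z - τ x - τ y| < |z - τ x| = |y|`; then `x` lies in the ball around `x + y` of radius
`|z - τ (x + y)| < |y|`, although `|x - (x + y)| = |y|`.
-/

namespace AbsoluteValue

variable {K L : Type*} [Ring K] [Ring L]

def closedBall (v : AbsoluteValue K ℝ) (a : K) (r : ℝ) : Set K := {x | v (x - a) ≤ r}

-- Index types live in `Type`; chains indexed by sets of radii in `ℝ` are what gets used.
def IsSphericallyComplete (v : AbsoluteValue K ℝ) : Prop :=
  ∀ (ι : Type) (a : ι → K) (r : ι → ℝ), Nonempty ι →
    (∀ i j, closedBall v (a i) (r i) ⊆ closedBall v (a j) (r j) ∨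
      closedBall v (a j) (r j) ⊆ closedBall v (a i) (r i)) →
    (∀ i, (closedBall v (a i) (r i)).Nonempty) →
    (⋂ i, closedBall v (a i) (r i)).Nonempty

variable {v : AbsoluteValue K ℝ}

theorem sub_le_max_of_isNonarchimedean (hv : IsNonarchimedean v) (a b : K) :
    v (a - b) ≤ max (v a) (v b) := by
  simpa [sub_eq_add_neg] using hv a (-b)

theorem closedBall_subset_closedBall_of_isNonarchimedean (hv : IsNonarchimedean v) {a b : K}
    {r s : ℝ} (hab : v (a - b) ≤ s) (hrs : r ≤ s) : closedBall v a r ⊆ closedBall v b s :=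
  fun x hx => calc
    v (x - b) = v ((x - a) + (a - b)) := by rw [sub_add_sub_cancel]
    _ ≤ max (v (x - a)) (v (a - b)) := hv _ _
    _ ≤ s := max_le (le_trans hx hrs) hab

-- The balls `closedBall v y (r y)` are pairwise nested; index them by their radii.
theorem IsSphericallyComplete.exists_forall_sub_le (hsc : v.IsSphericallyComplete)
    (hv : IsNonarchimedean v) (r : K → ℝ) (hr : ∀ y y', v (y - y') ≤ max (r y) (r y')) :
    ∃ x, ∀ y, v (x - y) ≤ r y := by
  have hball : ∀ y y', r y ≤ r y' → closedBall v y (r y) ⊆ closedBall v y' (r y') :=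
    fun y y' hyy' => closedBall_subset_closedBall_of_isNonarchimedean hv
      ((hr y y').trans_eq (max_eq_right hyy')) hyy'
  have hr_nonneg : ∀ y, 0 ≤ r y := fun y => by simpa using hr y y
  choose c hc using fun i : Set.range r => i.2
  obtain ⟨x, hx⟩ := hsc (Set.range r) c (↑) ⟨⟨r 0, 0, rfl⟩⟩
    (fun i j => by
      simp only [← hc]
      exact (le_total (r (c i)) (r (c j))).imp (hball _ _) (hball _ _))
    (fun i => ⟨c i, by simpa [closedBall, hc i] using hr_nonneg (c i)⟩)
  refine ⟨x, fun y => ?_⟩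
  have hy := Set.mem_iInter.mp hx ⟨r y, y, rfl⟩
  exact hball (c ⟨r y, y, rfl⟩) y (hc _).le (by simpa [hc] using hy)

theorem surjective_of_isSphericallyComplete {w : AbsoluteValue L ℝ}
    (hw : IsNonarchimedean w) (hsc : v.IsSphericallyComplete) (τ : K →+ L)
    (hτ : ∀ x, w (τ x) = v x) (happrox : ∀ z, z ≠ 0 → ∃ y, w (z - τ y) < w z) :
    Function.Surjective τ := by
  have hv : IsNonarchimedean v := fun a b => by simpa only [← hτ, map_add] using hw (τ a) (τ b)
  intro z
  obtain ⟨x, hx⟩ := hsc.exists_forall_sub_le hv (fun y => w (z - τ y)) fun y y' => by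
    simpa only [← hτ, map_sub, sub_sub_sub_cancel_left, max_comm (w (z - τ y))] using
      sub_le_max_of_isNonarchimedean hw (z - τ y') (z - τ y)
  refine ⟨x, ?_⟩
  by_contra hxz
  obtain ⟨y, hy⟩ := happrox (z - τ x) (sub_ne_zero.mpr (Ne.symm hxz))
  have hwy : w (τ y) = w (z - τ x) := by
    simpa using
      hw.add_eq_left_of_lt (x := z - τ x) (y := -(z - τ x - τ y)) (by rwa [map_neg_eq_map])
  have hxy := hx (x + y)
  rw [sub_add_cancel_left, map_neg_eq_map, ← hτ, hwy, map_add, ← sub_sub] at hxy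
  exact hxy.not_gt hy

end AbsoluteValue

/-- Let `K` be a nonarchimedean valued field (absolute value `v`) which is
spherically complete: every chain of closed balls (each of which is nonempty) has a common
point. If `τ : K → K` is a ring homomorphism preserving the absolute value such that for every
nonzero `x` there is `y` with `v (x - τ y) < v x` (surjectivity on residue field and value
group), then `τ` is surjective. -/
theorem spherically_complete_endomorphism_surjective
    {K : Type*} [Field K] (v : K → ℝ)
    (hnn : ∀ x, 0 ≤ v x) (h0 : ∀ x, v x = 0 ↔ x = 0)
    (hmul : ∀ x y, v (x * y) = v x * v y)
    (hna : ∀ x y, v (x + y) ≤ max (v x) (v y))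
    (hsph : ∀ (ι : Type) (a : ι → K) (r : ι → ℝ), Nonempty ι →
      (∀ i j : ι, {x : K | v (x - a i) ≤ r i} ⊆ {x : K | v (x - a j) ≤ r j} ∨
        {x : K | v (x - a j) ≤ r j} ⊆ {x : K | v (x - a i) ≤ r i}) →
      (∀ i, ∃ x, v (x - a i) ≤ r i) →
      ∃ x : K, ∀ i, v (x - a i) ≤ r i)
    (τ : K →+* K) (hτ : ∀ x, v (τ x) = v x)
    (happrox : ∀ x : K, x ≠ 0 → ∃ y : K, v (x - τ y) < v x) :
    Function.Surjective τ := by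
  let abv : AbsoluteValue K ℝ :=
    ⟨⟨v, hmul⟩, hnn, h0, fun _ _ => IsNonarchimedean.add_le hnn hna⟩
  have hsc : abv.IsSphericallyComplete := fun ι a r hι hchain hne =>
    (hsph ι a r hι hchain hne).imp fun _ hx => Set.mem_iInter.mpr hx
  exact AbsoluteValue.surjective_of_isSphericallyComplete (w := abv) hna hsc τ.toAddMonoidHom hτ
    happrox
end

section
/- Let K be a field complete with respect to a nonarchimedean absolute value, and let L/K be an extension of complete nonarchimedean fields such that the separable algebraic closure of K in L is dense in L. Then the completed module of Kähler differentials Ω̂_{L/K} vanishes; equivalently, the Kähler seminorm on Ω_{L/K} is identically zero. -/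
/-!
A separable element `x` is a simple root of its minimal polynomial `f`, so applying a derivation
to `f(x) = 0` gives `f'(x) • D x = 0` with `f'(x) ≠ 0`, whence `D x = 0`. A nonexpanding `D`
therefore satisfies `N (D y) = N (D (y - x)) ≤ |y - x|` for every separable `x`, which density
makes arbitrarily small. Finally the elements `D y` span `Ω_{L/K}`, and the zero set of an
ultrametric seminorm is a submodule.
-/

open Polynomial in
theorem Derivation.map_eq_zero_of_isSeparable {K L M : Type*} [Field K] [Field L] [Algebra K L]
    [AddCommGroup M] [Module L M] [Module K M] [IsScalarTower K L M]
    (D : Derivation K L M) {x : L} (hx : IsSeparable K x) : D x = 0 := by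
  have hD : aeval x (derivative (minpoly K x)) • D x = 0 := by
    rw [← D.map_aeval, minpoly.aeval, map_zero]
  exact (smul_eq_zero.mp hD).resolve_left (hx.aeval_derivative_ne_zero (minpoly.aeval K x))

theorem eq_zero_of_map_le_of_dense_ker {F L M : Type*} [AddGroup L] [AddGroup M]
    [FunLike F L M] [AddMonoidHomClass F L M] (f : F) (v : L → ℝ) (N : M → ℝ)
    (hN : ∀ ω, 0 ≤ N ω) (hf : ∀ x, N (f x) ≤ v x)
    (hdense : ∀ y, ∀ ε > 0, ∃ x, f x = 0 ∧ v (y - x) < ε) (y : L) : N (f y) = 0 := by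
  refine le_antisymm (le_of_forall_pos_le_add fun ε hε ↦ ?_) (hN _)
  obtain ⟨x, hx, hxy⟩ := hdense y ε hε
  calc N (f y) = N (f (y - x)) := by rw [map_sub, hx, sub_zero]
    _ ≤ 0 + ε := by linarith [hf (y - x)]

theorem eq_zero_of_mem_span_of_forall_eq_zero {L M : Type*} [Semiring L] [AddCommMonoid M]
    [Module L M] (v : L → ℝ) (N : M → ℝ) (hN : ∀ ω, 0 ≤ N ω)
    (hadd : ∀ ω η, N (ω + η) ≤ max (N ω) (N η)) (hsmul : ∀ (a : L) ω, N (a • ω) = v a * N ω)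
    {s : Set M} (hs : s.Nonempty) (hzero : ∀ ω ∈ s, N ω = 0) {ω : M}
    (hω : ω ∈ Submodule.span L s) : N ω = 0 := by
  induction hω using Submodule.span_induction with
  | mem η hη => exact hzero η hη
  | zero =>
    obtain ⟨η, hη⟩ := hs
    rw [← zero_smul L η, hsmul, hzero η hη, mul_zero]
  | add η θ _ _ hη hθ => exact le_antisymm (by simpa [hη, hθ] using hadd η θ) (hN _)
  | smul a η _ hη => rw [hsmul, hη, mul_zero]

theorem kaehler_seminorm_vanishes_of_separable_dense_general
    {K L : Type*} [Field K] [Field L] [Algebra K L]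
    (vL : L → ℝ)
    (hdense : ∀ y : L, ∀ ε : ℝ, 0 < ε →
      ∃ x : L, IsIntegral K x ∧ IsSeparable K x ∧ vL (y - x) < ε) :
    ∀ N : KaehlerDifferential K L → ℝ,
      (∀ ω, 0 ≤ N ω) →
      (∀ ω η, N (ω + η) ≤ max (N ω) (N η)) →
      (∀ (a : L) ω, N (a • ω) = vL a * N ω) →
      (∀ x : L, N (KaehlerDifferential.D K L x) ≤ vL x) →
      ∀ ω, N ω = 0 := by
  intro N hN hadd hsmul hD ω
  have hD_ker_dense : ∀ y, ∀ ε > 0, ∃ x, KaehlerDifferential.D K L x = 0 ∧ vL (y - x) < ε := by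
    intro y ε hε
    obtain ⟨x, -, hx, hxy⟩ := hdense y ε hε
    exact ⟨x, (KaehlerDifferential.D K L).map_eq_zero_of_isSeparable hx, hxy⟩
  have hω : ω ∈ Submodule.span L (Set.range (KaehlerDifferential.D K L)) := by
    rw [KaehlerDifferential.span_range_derivation]; trivial
  refine eq_zero_of_mem_span_of_forall_eq_zero vL N hN hadd hsmul (Set.range_nonempty _) ?_ hω
  rintro _ ⟨y, rfl⟩
  exact eq_zero_of_map_le_of_dense_ker _ vL N hN hD hD_ker_dense y

/-- Let `L/K` be an extension of complete nonarchimedean valued fields such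
that the set of elements of `L` which are separable algebraic over `K` is dense in `L`. Then
the Kähler seminorm on `Ω_{L/K}` is identically zero (equivalently, the completed module of
Kähler differentials vanishes): every `L`-seminorm `N` on `Ω_{L/K}` making the universal
derivation nonexpanding is identically zero. -/
theorem kaehler_seminorm_vanishes_of_separable_dense
    {K L : Type*} [Field K] [Field L] [Algebra K L]
    (vK : K → ℝ) (vL : L → ℝ)
    (hKnn : ∀ x, 0 ≤ vK x) (hK0 : ∀ x, vK x = 0 ↔ x = 0)
    (hKmul : ∀ x y, vK (x * y) = vK x * vK y)
    (hKna : ∀ x y, vK (x + y) ≤ max (vK x) (vK y))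
    (hLnn : ∀ x, 0 ≤ vL x) (hL0 : ∀ x, vL x = 0 ↔ x = 0)
    (hLmul : ∀ x y, vL (x * y) = vL x * vL y)
    (hLna : ∀ x y, vL (x + y) ≤ max (vL x) (vL y))
    (hcompat : ∀ x : K, vL (algebraMap K L x) = vK x)
    (hKcomplete : ∀ a : ℕ → K,
      (∀ ε : ℝ, 0 < ε → ∃ N, ∀ m ≥ N, ∀ n ≥ N, vK (a m - a n) < ε) →
      ∃ l : K, ∀ ε : ℝ, 0 < ε → ∃ N, ∀ n ≥ N, vK (a n - l) < ε)
    (hLcomplete : ∀ a : ℕ → L,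
      (∀ ε : ℝ, 0 < ε → ∃ N, ∀ m ≥ N, ∀ n ≥ N, vL (a m - a n) < ε) →
      ∃ l : L, ∀ ε : ℝ, 0 < ε → ∃ N, ∀ n ≥ N, vL (a n - l) < ε)
    (hdense : ∀ y : L, ∀ ε : ℝ, 0 < ε →
      ∃ x : L, IsIntegral K x ∧ IsSeparable K x ∧ vL (y - x) < ε) :
    ∀ N : KaehlerDifferential K L → ℝ,
      (∀ ω, 0 ≤ N ω) →
      (∀ ω η, N (ω + η) ≤ max (N ω) (N η)) →
      (∀ (a : L) ω, N (a • ω) = vL a * N ω) →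
      (∀ x : L, N (KaehlerDifferential.D K L x) ≤ vL x) →
      ∀ ω, N ω = 0 :=
  kaehler_seminorm_vanishes_of_separable_dense_general vL hdense
end

section
/- Let k be a complete nonarchimedean field, K the completion of the rational function field k(t_1, t_2, …) in countably many variables with respect to the Gauss norm (the norm of a nonzero polynomial is the maximum of the absolute values of its coefficients, extended multiplicatively to fractions). Let x_1, x_2, … ∈ k^× with |x_i| < 1 and lim_n |x_1⋯x_n| > 0, and suppose there is λ ∈ k^× with |λ| < |x_1⋯x_n| for all n. Let τ : K → K be the unique continuous k-algebra endomorphism with τ(t_n) = t_n − x_n t_{n+1} for all n. Then t_1 is not in the image of τ; in particular τ is a norm-preserving continuous endomorphism of K that is not surjective. -/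
/-!
Formally `t 0 = τ (∑ⱼ cⱼ tⱼ)` with `cⱼ = x 0 ⋯ x (j-1)`, but the series diverges since
`v cⱼ > v λ`. The partial sums `sₘ` satisfy `τ sₘ = t 0 - cₘ tₘ`, so a preimage `y` of `t 0`
has `w (y - sₙ₊₁) = v cₙ₊₁` for every `n`. Approximating `y` to within `v λ < v cₙ₊₁` by some `z`
in the field generated by `t 0, …, t (n-1)` gives `w (sₙ₊₁ - z) ≤ v cₙ₊₁`, whereas the Gauss
bound on the coefficient `cₙ` of `tₙ` gives `w (sₙ₊₁ - z) ≥ v cₙ > v cₙ₊₁`.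
-/

open Finset

theorem isAbsoluteValue_of_isNonarchimedean {R : Type*} [Semiring R] {f : R → ℝ}
    (hnn : ∀ x, 0 ≤ f x) (h0 : ∀ x, f x = 0 ↔ x = 0) (hmul : ∀ x y, f (x * y) = f x * f y)
    (hna : IsNonarchimedean f) : IsAbsoluteValue f where
  abv_nonneg' := hnn
  abv_eq_zero' := h0 _
  abv_add' _ _ := hna.add_le hnn
  abv_mul' := hmul

theorem map_sum_prod_mul_eq_sub {k R : Type*} [CommSemiring k] [CommRing R]
    (ι : k →+* R) (τ : R →+* R) (t : ℕ → R) (x : ℕ → k)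
    (hτk : ∀ a, τ (ι a) = ι a) (hτt : ∀ n, τ (t n) = t n - ι (x n) * t (n + 1)) (m : ℕ) :
    τ (∑ j ∈ range m, ι (∏ i ∈ range j, x i) * t j) = t 0 - ι (∏ i ∈ range m, x i) * t m := by
  have hstep : ∀ j, τ (ι (∏ i ∈ range j, x i) * t j) =
      ι (∏ i ∈ range j, x i) * t j - ι (∏ i ∈ range (j + 1), x i) * t (j + 1) := fun j => by
    rw [map_mul, hτk, hτt, prod_range_succ, map_mul]
    ring
  rw [map_sum, sum_congr rfl fun j _ => hstep j, sum_range_sub', prod_range_zero, map_one, one_mul]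

theorem sum_mul_mem_closure_range_union_image_Iio {k K : Type*} [Semiring k] [Field K]
    (ι : k →+* K) (t : ℕ → K) (a : ℕ → k) (n : ℕ) :
    ∑ j ∈ range n, ι (a j) * t j ∈ Subfield.closure (Set.range ι ∪ t '' Set.Iio n) :=
  Subfield.sum_mem _ fun j hj => Subfield.mul_mem _
    (Subfield.subset_closure (Or.inl ⟨a j, rfl⟩))
    (Subfield.subset_closure (Or.inr ⟨j, mem_range.mp hj, rfl⟩))

theorem gauss_norm_endomorphism_not_surjective_general
    {k K : Type*} [Field k] [Field K]
    (v : k → ℝ) (w : K → ℝ)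
    (hvnn : ∀ x, 0 ≤ v x) (hv0 : ∀ x, v x = 0 ↔ x = 0)
    (hvmul : ∀ x y, v (x * y) = v x * v y)
    (hwnn : ∀ x, 0 ≤ w x) (hw0 : ∀ x, w x = 0 ↔ x = 0)
    (hwmul : ∀ x y, w (x * y) = w x * w y)
    (hwna : ∀ x y, w (x + y) ≤ max (w x) (w y))
    (ι : k →+* K) (hι : ∀ a, w (ι a) = v a)
    (t : ℕ → K) (ht1 : ∀ n, w (t n) = 1)
    (hdense : ∀ y : K, ∀ ε : ℝ, 0 < ε → ∃ n : ℕ,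
      ∃ y' ∈ Subfield.closure (Set.range ι ∪ t '' Set.Iio n), w (y - y') < ε)
    (hgauss : ∀ n : ℕ, ∀ a : k,
      ∀ g ∈ Subfield.closure (Set.range ι ∪ t '' Set.Iio n), v a ≤ w (ι a * t n + g))
    (x : ℕ → k) (hx1 : ∀ i, v (x i) < 1)
    (lam : k) (hlam0 : lam ≠ 0)
    (hlam : ∀ n, v lam < v (∏ i ∈ Finset.range n, x i))
    (τ : K →+* K) (hτk : ∀ a : k, τ (ι a) = ι a) (hτw : ∀ y, w (τ y) = w y)
    (hτt : ∀ n, τ (t n) = t n - ι (x n) * t (n + 1)) :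
    t 0 ∉ Set.range τ := by
  rintro ⟨y, hy⟩
  have : IsAbsoluteValue w := isAbsoluteValue_of_isNonarchimedean hwnn hw0 hwmul hwna
  set c : ℕ → k := fun m => ∏ i ∈ range m, x i
  set s : ℕ → K := fun m => ∑ j ∈ range m, ι (c j) * t j
  obtain ⟨n, z, hz, hyz⟩ := hdense y (v lam) ((hvnn lam).lt_of_ne' (mt (hv0 lam).1 hlam0))
  have hsy : w (s (n + 1) - y) = v (c (n + 1)) := by
    rw [IsAbsoluteValue.abv_sub w, ← hτw, map_sub, hy, map_sum_prod_mul_eq_sub ι τ t x hτk hτt,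
      sub_sub_cancel, hwmul, hι, ht1, mul_one]
  have upper : w (s (n + 1) - z) ≤ v (c (n + 1)) := by
    rw [← sub_add_sub_cancel _ y]
    exact (hwna _ _).trans (max_le hsy.le (hyz.trans (hlam _)).le)
  have lower : v (c n) ≤ w (s (n + 1) - z) := by
    rw [show s (n + 1) - z = ι (c n) * t n + (s n - z) by simp only [s, sum_range_succ]; ring]
    exact hgauss n _ _ (sub_mem (sum_mul_mem_closure_range_union_image_Iio ι t c n) hz)
  have decreasing : v (c (n + 1)) < v (c n) := by
    simp only [c, prod_range_succ, hvmul]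
    exact mul_lt_of_lt_one_right ((hvnn lam).trans_lt (hlam n)) (hx1 n)
  linarith

/-- Let `K` be the completion of `k(t_0, t_1, …)` for the Gauss norm `w`
(extending the absolute value `v` of `k`, with `w (t n) = 1`, the rational functions in
finitely many variables dense in `K`, and the Gauss-norm coefficient bound
`v a ≤ w (a · t n + g)` for `g` a rational function in `t_0, …, t_{n-1}`). Let `x_i ∈ k^×`
with `v (x i) < 1` and suppose `λ ∈ k^×` satisfies `v λ < v (x_0 ⋯ x_{n-1})` for all `n`.
If `τ : K → K` is the norm-preserving `k`-algebra endomorphism with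
`τ (t n) = t n - x n · t (n+1)`, then `t 0` is not in the image of `τ`; in particular `τ` is
not surjective. -/
theorem gauss_norm_endomorphism_not_surjective
    {k K : Type*} [Field k] [Field K]
    (v : k → ℝ) (w : K → ℝ)
    (hvnn : ∀ x, 0 ≤ v x) (hv0 : ∀ x, v x = 0 ↔ x = 0)
    (hvmul : ∀ x y, v (x * y) = v x * v y)
    (hvna : ∀ x y, v (x + y) ≤ max (v x) (v y))
    (hwnn : ∀ x, 0 ≤ w x) (hw0 : ∀ x, w x = 0 ↔ x = 0)
    (hwmul : ∀ x y, w (x * y) = w x * w y)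
    (hwna : ∀ x y, w (x + y) ≤ max (w x) (w y))
    (hcomplete : ∀ a : ℕ → K,
      (∀ ε : ℝ, 0 < ε → ∃ N, ∀ m ≥ N, ∀ n ≥ N, w (a m - a n) < ε) →
      ∃ l : K, ∀ ε : ℝ, 0 < ε → ∃ N, ∀ n ≥ N, w (a n - l) < ε)
    (ι : k →+* K) (hι : ∀ a, w (ι a) = v a)
    (t : ℕ → K) (ht1 : ∀ n, w (t n) = 1)
    (hdense : ∀ y : K, ∀ ε : ℝ, 0 < ε → ∃ n : ℕ,
      ∃ y' ∈ Subfield.closure (Set.range ι ∪ t '' Set.Iio n), w (y - y') < ε)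
    (hgauss : ∀ n : ℕ, ∀ a : k,
      ∀ g ∈ Subfield.closure (Set.range ι ∪ t '' Set.Iio n), v a ≤ w (ι a * t n + g))
    (x : ℕ → k) (hx0 : ∀ i, x i ≠ 0) (hx1 : ∀ i, v (x i) < 1)
    (lam : k) (hlam0 : lam ≠ 0)
    (hlam : ∀ n, v lam < v (∏ i ∈ Finset.range n, x i))
    (τ : K →+* K) (hτk : ∀ a : k, τ (ι a) = ι a) (hτw : ∀ y, w (τ y) = w y)
    (hτt : ∀ n, τ (t n) = t n - ι (x n) * t (n + 1)) :
    t 0 ∉ Set.range τ :=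
  gauss_norm_endomorphism_not_surjective_general v w hvnn hv0 hvmul hwnn hw0 hwmul hwna ι hι t ht1
    hdense hgauss x hx1 lam hlam0 hlam τ hτk hτw hτt
end

section
/- Let K be a complete nonarchimedean field, L/K an extension of complete nonarchimedean fields, and t ∈ L such that K(t) is dense in L. Then the completed module of Kähler differentials Ω̂_{L/K} (completion of Ω_{L/K} for the Kähler seminorm) is generated as an L-module by the single element d̂(t). -/
/-! Every element `z` of the field `K(t)` satisfies `d z ∈ L · d t`, since the elements with this
property form a subfield containing `K` and `t` (Leibniz rule and `d (a⁻¹) = -a⁻² d a`). Given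
`x ∈ L`, pick `z ∈ K(t)` close to `x`; as `d` is nonexpanding, `d x` is close to `d z ∈ L · d t`.
The differentials that can be approximated by `L · d t` form a submodule, and it contains the
generators `d x` of `Ω_{L/K}`, so it is everything. -/

theorem Derivation.map_mem_span_image_of_mem_closure {K L M : Type*} [CommRing K] [Field L]
    [Algebra K L] [AddCommGroup M] [Module K M] [Module L M] (D : Derivation K L M) {S : Set L}
    {z : L} (hz : z ∈ Subfield.closure (Set.range (algebraMap K L) ∪ S)) :
    D z ∈ Submodule.span L (D '' S) := by
  induction hz using Subfield.closure_induction with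
  | mem x hx =>
    rcases hx with ⟨k, rfl⟩ | hx
    · simp
    · exact Submodule.subset_span (Set.mem_image_of_mem D hx)
  | one => simp
  | add x y _ _ hx hy => simpa using add_mem hx hy
  | neg x _ hx => simpa using neg_mem hx
  | inv x _ hx =>
    rw [D.leibniz_inv]
    exact Submodule.smul_mem _ _ hx
  | mul x y _ _ hx hy =>
    rw [D.leibniz]
    exact add_mem (Submodule.smul_mem _ x hy) (Submodule.smul_mem _ y hx)

def Submodule.closureWrt {R M : Type*} [Ring R] [AddCommGroup M] [Module R M]
    (N : M → ℝ) (v : R → ℝ) (hv : ∀ a, 0 ≤ v a) (hN_zero : N 0 = 0)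
    (hN_add : ∀ x y, N (x + y) ≤ N x + N y) (hN_smul : ∀ (a : R) x, N (a • x) ≤ v a * N x)
    (P : Submodule R M) : Submodule R M where
  carrier := {x | ∀ ε > 0, ∃ p ∈ P, N (x - p) < ε}
  zero_mem' ε hε := ⟨0, P.zero_mem, by simpa [hN_zero] using hε⟩
  add_mem' {x y} hx hy ε hε := by
    obtain ⟨p, hp, hxp⟩ := hx (ε / 2) (half_pos hε)
    obtain ⟨q, hq, hyq⟩ := hy (ε / 2) (half_pos hε)
    refine ⟨p + q, P.add_mem hp hq, ?_⟩
    calc N (x + y - (p + q)) = N ((x - p) + (y - q)) := by rw [add_sub_add_comm]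
      _ ≤ N (x - p) + N (y - q) := hN_add _ _
      _ < ε := by linarith
  smul_mem' a x hx ε hε := by
    have hva := hv a
    obtain ⟨p, hp, hxp⟩ := hx (ε / (v a + 1)) (by positivity)
    refine ⟨a • p, P.smul_mem a hp, ?_⟩
    calc N (a • x - a • p) = N (a • (x - p)) := by rw [smul_sub]
      _ ≤ v a * N (x - p) := hN_smul _ _
      _ ≤ v a * (ε / (v a + 1)) := mul_le_mul_of_nonneg_left hxp.le hva
      _ < ε := by rw [mul_div_assoc', div_lt_iff₀ (by positivity)]; nlinarith

theorem completed_kaehler_generated_by_dt_general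
    {K L : Type*} [Field K] [Field L] [Algebra K L]
    (vL : L → ℝ)
    (hLnn : ∀ x, 0 ≤ vL x) (hL0 : ∀ x, vL x = 0 ↔ x = 0)
    (t : L)
    (hdense : ∀ y : L, ∀ ε : ℝ, 0 < ε →
      ∃ z ∈ Subfield.closure (Set.range (algebraMap K L) ∪ {t}), vL (y - z) < ε) :
    ∀ N : KaehlerDifferential K L → ℝ,
      (∀ ω, 0 ≤ N ω) →
      (∀ ω η, N (ω + η) ≤ max (N ω) (N η)) →
      (∀ (a : L) ω, N (a • ω) = vL a * N ω) →
      (∀ x : L, N (KaehlerDifferential.D K L x) ≤ vL x) →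
      ∀ ω : KaehlerDifferential K L, ∀ ε : ℝ, 0 < ε →
        ∃ a : L, N (ω - a • KaehlerDifferential.D K L t) < ε := by
  intro N hNnn hNmax hNsmul hNd ω ε hε
  set D := KaehlerDifferential.D K L
  have hN_zero : N 0 = 0 := by simpa [(hL0 0).mpr rfl] using hNsmul 0 0
  let C := (L ∙ D t).closureWrt N vL hLnn hN_zero
    (fun x y ↦ (hNmax x y).trans (max_le_add_of_nonneg (hNnn x) (hNnn y)))
    (fun a x ↦ (hNsmul a x).le)
  have hD_mem : Set.range D ⊆ C := by
    rintro _ ⟨x, rfl⟩ ε hε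
    obtain ⟨z, hz, hxz⟩ := hdense x ε hε
    refine ⟨D z, by simpa using D.map_mem_span_image_of_mem_closure hz, ?_⟩
    rw [← map_sub]
    exact (hNd _).trans_lt hxz
  have hC : C = ⊤ :=
    top_le_iff.mp (KaehlerDifferential.span_range_derivation K L ▸ Submodule.span_le.mpr hD_mem)
  obtain ⟨p, hp, hωp⟩ := (hC ▸ Submodule.mem_top : ω ∈ C) ε hε
  obtain ⟨a, rfl⟩ := Submodule.mem_span_singleton.mp hp
  exact ⟨a, hωp⟩

/-- Let `L/K` be an extension of complete nonarchimedean fields and `t ∈ L`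
with `K(t)` dense in `L`. Then the completed module of Kähler differentials is generated by
`d̂ t`: for every admissible seminorm `N` on `Ω_{L/K}` (`L`-seminorm making `d` nonexpanding),
every `ω` and every `ε > 0`, there is `a ∈ L` with `N (ω - a • d t) < ε`. -/
theorem completed_kaehler_generated_by_dt
    {K L : Type*} [Field K] [Field L] [Algebra K L]
    (vK : K → ℝ) (vL : L → ℝ)
    (hKnn : ∀ x, 0 ≤ vK x) (hK0 : ∀ x, vK x = 0 ↔ x = 0)
    (hKmul : ∀ x y, vK (x * y) = vK x * vK y)
    (hKna : ∀ x y, vK (x + y) ≤ max (vK x) (vK y))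
    (hLnn : ∀ x, 0 ≤ vL x) (hL0 : ∀ x, vL x = 0 ↔ x = 0)
    (hLmul : ∀ x y, vL (x * y) = vL x * vL y)
    (hLna : ∀ x y, vL (x + y) ≤ max (vL x) (vL y))
    (hcompat : ∀ x : K, vL (algebraMap K L x) = vK x)
    (hKcomplete : ∀ a : ℕ → K,
      (∀ ε : ℝ, 0 < ε → ∃ N, ∀ m ≥ N, ∀ n ≥ N, vK (a m - a n) < ε) →
      ∃ l : K, ∀ ε : ℝ, 0 < ε → ∃ N, ∀ n ≥ N, vK (a n - l) < ε)
    (hLcomplete : ∀ a : ℕ → L,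
      (∀ ε : ℝ, 0 < ε → ∃ N, ∀ m ≥ N, ∀ n ≥ N, vL (a m - a n) < ε) →
      ∃ l : L, ∀ ε : ℝ, 0 < ε → ∃ N, ∀ n ≥ N, vL (a n - l) < ε)
    (t : L)
    (hdense : ∀ y : L, ∀ ε : ℝ, 0 < ε →
      ∃ z ∈ Subfield.closure (Set.range (algebraMap K L) ∪ {t}), vL (y - z) < ε) :
    ∀ N : KaehlerDifferential K L → ℝ,
      (∀ ω, 0 ≤ N ω) →
      (∀ ω η, N (ω + η) ≤ max (N ω) (N η)) →
      (∀ (a : L) ω, N (a • ω) = vL a * N ω) →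
      (∀ x : L, N (KaehlerDifferential.D K L x) ≤ vL x) →
      ∀ ω : KaehlerDifferential K L, ∀ ε : ℝ, 0 < ε →
        ∃ a : L, N (ω - a • KaehlerDifferential.D K L t) < ε :=
  completed_kaehler_generated_by_dt_general vL hLnn hL0 t hdense
end

section
/- Let L/K be an extension of complete nonarchimedean fields and let 𝒜 = L ⊗̂_K L with the tensor product norm, J = ker(𝒜 → L) the kernel of the multiplication map, and T = 1⊗t − t⊗1 for some t ∈ L. Suppose a_n ∈ K and r_n → 0 are such that |t^{p^n} − a_n| ≤ r_n^{p^n} for all n (characteristic p). Then ‖T^{p^n}‖ ≤ r_n^{p^n} for every n; in particular T is quasi-nilpotent (its spectral seminorm is 0). -/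
/-! In characteristic `p` the Frobenius gives `T ^ p ^ n = φ s - ψ s` with
`s = t ^ p ^ n - a n`, because `φ` and `ψ` agree on `K`; the ultrametric inequality then bounds
`‖T ^ p ^ n‖` by `|s| ≤ r n ^ p ^ n`. For quasi-nilpotence, a submultiplicative sequence with
`u N ≤ δ ^ N` for some `N > 0` is `O(δ ^ m)`, so its `m`-th roots are eventually below any
`δ' > δ`, and `δ` can be taken arbitrarily small since `r n → 0`. -/

open Filter Topology

lemma sub_pow_expChar_pow_eq_map_sub_map {L A : Type*} [CommRing L] [CommRing A]
    {p : ℕ} [ExpChar A p] (φ ψ : L →+* A) {c : L} (hc : φ c = ψ c) (t : L) (n : ℕ) :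
    (φ t - ψ t) ^ p ^ n = φ (t ^ p ^ n - c) - ψ (t ^ p ^ n - c) := by
  rw [sub_pow_expChar_pow, map_sub, map_sub, map_pow, map_pow, hc]
  ring

section Submultiplicative

variable {u : ℕ → ℝ} (hu₀ : ∀ n, 0 ≤ u n) (hu : ∀ m n, u (m + n) ≤ u m * u n)
include hu₀

include hu in
lemma exists_le_mul_pow_of_submultiplicative {N : ℕ} (hN : 0 < N) {δ : ℝ} (hδ : 0 < δ)
    (huN : u N ≤ δ ^ N) : ∃ C, ∀ m, u m ≤ C * δ ^ m := by
  refine ⟨∑ s ∈ Finset.range N, u s / δ ^ s, fun m => ?_⟩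
  induction m using Nat.strong_induction_on with
  | _ m ih =>
    rcases lt_or_ge m N with hm | hm
    · rw [← div_le_iff₀ (pow_pos hδ m)]
      exact Finset.single_le_sum (fun s _ => div_nonneg (hu₀ s) (pow_pos hδ s).le)
        (Finset.mem_range.2 hm)
    · obtain ⟨k, rfl⟩ := Nat.exists_eq_add_of_le hm
      calc u (N + k) ≤ u N * u k := hu N k
        _ ≤ δ ^ N * ((∑ s ∈ Finset.range N, u s / δ ^ s) * δ ^ k) :=
          mul_le_mul huN (ih k (by omega)) (hu₀ k) (pow_pos hδ N).le
        _ = (∑ s ∈ Finset.range N, u s / δ ^ s) * δ ^ (N + k) := by ring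

lemma tendsto_rpow_inv_zero_of_forall_le_mul_pow
    (h : ∀ δ > 0, ∃ C, ∀ m, u m ≤ C * δ ^ m) :
    Tendsto (fun m : ℕ => u m ^ (m : ℝ)⁻¹) atTop (𝓝 0) := by
  refine tendsto_order.2 ⟨fun l hl => .of_forall fun m => hl.trans_le
    (Real.rpow_nonneg (hu₀ m) _), fun L hL => ?_⟩
  obtain ⟨C, hC⟩ := h (L / 2) (half_pos hL)
  set C' := max C 1
  have hroot : Tendsto (fun m : ℕ => C' ^ (m : ℝ)⁻¹) atTop (𝓝 1) := by
    have := (Real.continuousAt_const_rpow (a := C') (b := 0) (by positivity)).tendsto.comp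
      tendsto_inv_atTop_nhds_zero_nat
    rwa [Real.rpow_zero] at this
  filter_upwards [hroot.eventually_lt_const one_lt_two, eventually_ne_atTop 0] with m hm hm₀
  calc u m ^ (m : ℝ)⁻¹ ≤ (C' * (L / 2) ^ m) ^ (m : ℝ)⁻¹ :=
        Real.rpow_le_rpow (hu₀ m) ((hC m).trans (by gcongr; exact le_max_left _ _))
          (by positivity)
    _ = C' ^ (m : ℝ)⁻¹ * (L / 2) := by
        rw [Real.mul_rpow (by positivity) (by positivity),
          Real.pow_rpow_inv_natCast (by positivity) hm₀]
    _ < 2 * (L / 2) := by gcongr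
    _ = L := by ring

end Submultiplicative

theorem tensor_T_quasi_nilpotent_general
    {K L A : Type*} [Field K] [Field L] [CommRing A]
    (p : ℕ) (hp : p.Prime) [CharP A p]
    (vL : L → ℝ)
    (hLnn : ∀ x, 0 ≤ vL x) (hL0 : ∀ x, vL x = 0 ↔ x = 0)
    (hLmul : ∀ x y, vL (x * y) = vL x * vL y)
    (hLna : ∀ x y, vL (x + y) ≤ max (vL x) (vL y))
    (nA : A → ℝ)
    (hAnn : ∀ a, 0 ≤ nA a) (hAna : ∀ a b, nA (a + b) ≤ max (nA a) (nA b))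
    (hAmul : ∀ a b, nA (a * b) ≤ nA a * nA b)
    (ι : K →+* L) (φ ψ : L →+* A)
    (hφψ : ∀ a : K, φ (ι a) = ψ (ι a))
    (hφ : ∀ x, nA (φ x) ≤ vL x) (hψ : ∀ x, nA (ψ x) ≤ vL x)
    (t : L) (a : ℕ → K) (r : ℕ → ℝ)
    (hrlim : Tendsto r atTop (nhds 0))
    (happ : ∀ n : ℕ, vL (t ^ p ^ n - ι (a n)) ≤ r n ^ p ^ n) :
    (∀ n : ℕ, nA ((φ t - ψ t) ^ p ^ n) ≤ r n ^ p ^ n) ∧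
    Tendsto (fun m : ℕ => nA ((φ t - ψ t) ^ m) ^ ((m : ℝ)⁻¹)) atTop (nhds 0) := by
  have : Fact p.Prime := ⟨hp⟩
  have : IsAbsoluteValue vL := ⟨hLnn, hL0 _, fun x y => (hLna x y).trans
    (max_le_add_of_nonneg (hLnn x) (hLnn y)), hLmul⟩
  have hpow : ∀ n, nA ((φ t - ψ t) ^ p ^ n) ≤ r n ^ p ^ n := fun n => by
    rw [sub_pow_expChar_pow_eq_map_sub_map φ ψ (hφψ (a n)), sub_eq_add_neg, ← map_neg ψ]
    calc _ ≤ max (vL (t ^ p ^ n - ι (a n))) (vL (-(t ^ p ^ n - ι (a n)))) :=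
          (hAna _ _).trans (max_le_max (hφ _) (hψ _))
      _ ≤ r n ^ p ^ n := by rw [IsAbsoluteValue.abv_neg vL, max_self]; exact happ n
  refine ⟨hpow, tendsto_rpow_inv_zero_of_forall_le_mul_pow (fun m => hAnn _) fun δ hδ => ?_⟩
  obtain ⟨n, hn⟩ := (hrlim.abs.eventually_lt_const (by simpa using hδ)).exists
  refine exists_le_mul_pow_of_submultiplicative (fun m => hAnn _)
    (fun m k => pow_add (φ t - ψ t) m k ▸ hAmul _ _) (pow_pos hp.pos n) hδ ?_
  calc _ ≤ r n ^ p ^ n := hpow n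
    _ ≤ |r n| ^ p ^ n := (le_abs_self _).trans (abs_pow (r n) _).le
    _ ≤ δ ^ p ^ n := by gcongr

/-- Let `L/K` be an extension of complete nonarchimedean fields of
characteristic `p`, `𝒜 = L ⊗̂_K L` with the tensor product (sub)norm `nA` (a nonarchimedean
submultiplicative seminorm for which both inclusions `φ, ψ : L → 𝒜` are nonexpanding and agree
on `K`), and `T = 1 ⊗ t - t ⊗ 1 = φ t - ψ t`. If `a n ∈ K` and `r n → 0` are such that
`|t^{p^n} - a n| ≤ (r n)^{p^n}` for all `n`, then `‖T^{p^n}‖ ≤ (r n)^{p^n}` for all `n`; in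
particular `T` is quasi-nilpotent: its spectral seminorm `lim_m ‖T^m‖^{1/m}` is `0`. -/
theorem tensor_T_quasi_nilpotent
    {K L A : Type*} [Field K] [Field L] [CommRing A]
    (p : ℕ) (hp : p.Prime) [CharP L p] [CharP A p]
    (vL : L → ℝ)
    (hLnn : ∀ x, 0 ≤ vL x) (hL0 : ∀ x, vL x = 0 ↔ x = 0)
    (hLmul : ∀ x y, vL (x * y) = vL x * vL y)
    (hLna : ∀ x y, vL (x + y) ≤ max (vL x) (vL y))
    (nA : A → ℝ)
    (hAnn : ∀ a, 0 ≤ nA a) (hAna : ∀ a b, nA (a + b) ≤ max (nA a) (nA b))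
    (hAmul : ∀ a b, nA (a * b) ≤ nA a * nA b) (hA1 : nA 1 ≤ 1)
    (ι : K →+* L) (φ ψ : L →+* A)
    (hφψ : ∀ a : K, φ (ι a) = ψ (ι a))
    (hφ : ∀ x, nA (φ x) ≤ vL x) (hψ : ∀ x, nA (ψ x) ≤ vL x)
    (t : L) (a : ℕ → K) (r : ℕ → ℝ) (hrnn : ∀ n, 0 ≤ r n)
    (hrlim : Tendsto r atTop (nhds 0))
    (happ : ∀ n : ℕ, vL (t ^ p ^ n - ι (a n)) ≤ r n ^ p ^ n) :
    (∀ n : ℕ, nA ((φ t - ψ t) ^ p ^ n) ≤ r n ^ p ^ n) ∧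
    Tendsto (fun m : ℕ => nA ((φ t - ψ t) ^ m) ^ ((m : ℝ)⁻¹)) atTop (nhds 0) :=
  tensor_T_quasi_nilpotent_general p hp vL hLnn hL0 hLmul hLna nA hAnn hAna hAmul ι φ ψ hφψ hφ hψ t
    a r hrlim happ
end
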